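/- For the quandle on {a,b,c,d} with matrix [a,a,b,b; b,b,a,a; d,d,c,c; c,c,d,d]: if ≤ is a compatible quasi-order, then (a ≤ b or b ≤ a) implies a and b are ≤-equivalent, and (c ≤ d or d ≤ c) implies c and d are ≤-equivalent. -/
import Mathlib

def CompatibleQuasiOrder {Q : Type*} (op : Q → Q → Q) (le : Q → Q → Prop) : Prop :=
  ∀ x x' y y' : Q, le x x' → le y y' → le (op x y) (op x' y')

def q4b : Fin 4 → Fin 4 → Fin 4 :=
  ![![0,0,1,1], ![1,1,0,0], ![3,3,2,2], ![2,2,3,3]]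

theorem stmt_14 (le : Fin 4 → Fin 4 → Prop)
    (hrefl : Reflexive le) (htrans : Transitive le)
    (hcomp : CompatibleQuasiOrder q4b le) :
    ((le 0 1 ∨ le 1 0) → (le 0 1 ∧ le 1 0)) ∧
    ((le 2 3 ∨ le 3 2) → (le 2 3 ∧ le 3 2)) := by
  constructor
  · rintro (h | h)
    · exact ⟨h, by have := hcomp 0 1 2 2 h (hrefl 2); simpa [q4b] using this⟩
    · exact ⟨by have := hcomp 1 0 2 2 h (hrefl 2); simpa [q4b] using this, h⟩
  · rintro (h | h)
    · exact ⟨h, by have := hcomp 2 3 0 0 h (hrefl 0); simpa [q4b] using this⟩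
    · exact ⟨by have := hcomp 3 2 0 0 h (hrefl 0); simpa [q4b] using this, h⟩
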